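/- arXiv:2010.15819 — 2 statements merged into one kernel-verified Lean document; each statement's English description precedes it below -/
import Mathlib

section
/- Let A_k, Â_k ∈ ℝ^{I_k×r_k} have orthonormal columns for k = 1, …, N, and let M = A₁ ⊗ A₂ ⊗ ⋯ ⊗ A_N, M̂ = Â₁ ⊗ Â₂ ⊗ ⋯ ⊗ Â_N. Then ‖sin Θ(M, M̂)‖ ≤ 2^{(N−1)/2} · max_k ‖sin Θ(A_k, Â_k)‖. -/
open Matrix

/-- Smallest singular value of a real matrix. -/
noncomputable def sMin {m n : Type*} [Fintype m] [Fintype n] [DecidableEq n]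
    (A : Matrix m n ℝ) : ℝ :=
  Real.sqrt (⨅ i, (show (Aᵀ * A).IsHermitian by
    simpa using Matrix.isHermitian_conjTranspose_mul_self A).eigenvalues i)

/-- Sine of the largest canonical angle between the column spaces of two matrices
with orthonormal columns: `‖sin Θ(X,Y)‖ = √(1 − σ_min(XᵀY)²)`. -/
noncomputable def sinTheta {m n : Type*} [Fintype m] [Fintype n] [DecidableEq n]
    (X Y : Matrix m n ℝ) : ℝ :=
  Real.sqrt (1 - sMin (Xᵀ * Y) ^ 2)

/-! The Gram matrix `MᵀM̂` is the Kronecker product of the `Gₖ = AₖᵀÂₖ`, hence so is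
`(MᵀM̂)ᵀ(MᵀM̂)` of the `GₖᵀGₖ`. Each `GₖᵀGₖ` dominates `σ_min(Gₖ)² • 1` in the Loewner order, and
Kronecker products are monotone on positive semidefinite factors, so
`σ_min(MᵀM̂)² ≥ ∏ₖ σ_min(Gₖ)²`. Since `cₖ = σ_min(Gₖ)² ∈ [0, 1]`, the Weierstrass product inequality
`1 - ∏ cₖ ≤ ∑ (1 - cₖ)` gives `‖sin Θ(M, M̂)‖² ≤ ∑ₖ ‖sin Θ(Aₖ, Âₖ)‖² ≤ N · maxₖ ‖sin Θ(Aₖ, Âₖ)‖²`,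
and `N ≤ 2^(N-1)`. -/

open scoped MatrixOrder ComplexOrder

namespace Matrix

section piKronecker

variable {ι R : Type*} [Fintype ι] {m n p : ι → Type*}

/-- `A₁ ⊗ ⋯ ⊗ A_N`, with rows and columns indexed by tuples of indices rather than flattened ones. -/
def piKronecker [CommMonoid R] (A : ∀ k, Matrix (m k) (n k) R) :
    Matrix (∀ k, m k) (∀ k, n k) R :=
  of fun i j => ∏ k, A k (i k) (j k)

@[simp]
theorem piKronecker_apply [CommMonoid R] (A : ∀ k, Matrix (m k) (n k) R) (i : ∀ k, m k)
    (j : ∀ k, n k) : piKronecker A i j = ∏ k, A k (i k) (j k) := rfl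

theorem piKronecker_transpose [CommMonoid R] (A : ∀ k, Matrix (m k) (n k) R) :
    (piKronecker A)ᵀ = piKronecker fun k => (A k)ᵀ := rfl

theorem piKronecker_conjTranspose [CommMonoid R] [StarMul R] (A : ∀ k, Matrix (m k) (n k) R) :
    (piKronecker A)ᴴ = piKronecker fun k => (A k)ᴴ := by
  ext i j
  simp [star_prod]

theorem piKronecker_mul [DecidableEq ι] [CommSemiring R] [∀ k, Fintype (n k)]
    (A : ∀ k, Matrix (m k) (n k) R) (B : ∀ k, Matrix (n k) (p k) R) :
    piKronecker A * piKronecker B = piKronecker fun k => A k * B k := by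
  ext i j
  simp only [mul_apply, piKronecker_apply, Finset.prod_univ_sum, Fintype.piFinset_univ,
    Finset.prod_mul_distrib]

theorem piKronecker_one [CommMonoidWithZero R] [∀ k, DecidableEq (m k)] :
    piKronecker (fun k => (1 : Matrix (m k) (m k) R)) = 1 := by
  ext i j
  simp only [piKronecker_apply, one_apply, Finset.prod_boole, Finset.mem_univ, forall_const,
    funext_iff]

theorem piKronecker_smul [CommMonoid R] (c : ι → R) (A : ∀ k, Matrix (m k) (n k) R) :
    piKronecker (fun k => c k • A k) = (∏ k, c k) • piKronecker A := by
  ext i j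
  simp [Finset.prod_mul_distrib]

theorem piKronecker_add [DecidableEq ι] [CommSemiring R] (A B : ∀ k, Matrix (m k) (n k) R) :
    piKronecker (fun k => A k + B k) =
      ∑ t ∈ Finset.univ.powerset, piKronecker fun k => if k ∈ t then A k else B k := by
  ext i j
  simp only [piKronecker_apply, add_apply, Finset.prod_add, sum_apply]
  refine Finset.sum_congr rfl fun t _ => ?_
  rw [← Finset.prod_mul_prod_compl t, Finset.compl_eq_univ_sdiff]
  congr 1 <;> refine Finset.prod_congr rfl fun k hk => ?_
  · rw [if_pos hk]
  · rw [if_neg (Finset.mem_sdiff.mp hk).2]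

variable {𝕜 : Type*} [RCLike 𝕜] [DecidableEq ι] [∀ k, Fintype (n k)]

theorem PosSemidef.piKronecker {Q : ∀ k, Matrix (n k) (n k) 𝕜} (hQ : ∀ k, (Q k).PosSemidef) :
    (piKronecker Q).PosSemidef := by
  classical
  choose B hB using fun k => CStarAlgebra.nonneg_iff_eq_star_mul_self.mp (hQ k).nonneg
  rw [funext hB]
  simp only [star_eq_conjTranspose]
  rw [← piKronecker_mul, ← piKronecker_conjTranspose]
  exact posSemidef_conjTranspose_mul_self _

theorem piKronecker_mono {X Y : ∀ k, Matrix (n k) (n k) 𝕜} (hX : ∀ k, 0 ≤ X k)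
    (hXY : ∀ k, X k ≤ Y k) : piKronecker X ≤ piKronecker Y := by
  -- expanding `Y k = (Y k - X k) + X k` writes `piKronecker Y` as a sum of Kronecker products of
  -- positive semidefinite matrices, the one indexed by `∅` being `piKronecker X`
  have hY : Y = fun k => (Y k - X k) + X k := by simp
  rw [hY, piKronecker_add]
  refine le_of_eq_of_le ?_ (Finset.single_le_sum (fun t _ => ?_) (Finset.empty_mem_powerset _))
  · simp
  · refine (PosSemidef.piKronecker fun k => ?_).nonneg
    split_ifs
    exacts [le_iff.mp (hXY k), (hX k).posSemidef]

end piKronecker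

namespace IsHermitian

variable {𝕜 n : Type*} [RCLike 𝕜] [Fintype n] [DecidableEq n] {H : Matrix n n 𝕜}
  (hH : H.IsHermitian) {c : ℝ}

theorem smul_one_le_iff_le_eigenvalues :
    c • (1 : Matrix n n 𝕜) ≤ H ↔ ∀ i, c ≤ hH.eigenvalues i := by
  rw [← Algebra.algebraMap_eq_smul_one, algebraMap_le_iff_le_spectrum hH.isSelfAdjoint,
    hH.spectrum_real_eq_range_eigenvalues, Set.forall_mem_range]

theorem le_smul_one_iff_eigenvalues_le :
    H ≤ c • (1 : Matrix n n 𝕜) ↔ ∀ i, hH.eigenvalues i ≤ c := by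
  rw [← Algebra.algebraMap_eq_smul_one, le_algebraMap_iff_spectrum_le hH.isSelfAdjoint,
    hH.spectrum_real_eq_range_eigenvalues, Set.forall_mem_range]

end IsHermitian

theorem posSemidef_transpose_mul_self {m n : Type*} [Fintype m] [Finite n] (G : Matrix m n ℝ) :
    (Gᵀ * G).PosSemidef := by
  simpa using posSemidef_conjTranspose_mul_self G

theorem mul_transpose_le_one {m n : Type*} [Fintype m] [Fintype n] [DecidableEq m]
    [DecidableEq n] {A : Matrix m n ℝ} (hA : Aᵀ * A = 1) : A * Aᵀ ≤ 1 := by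
  refine IsStarProjection.le_one ⟨?_, ?_⟩
  · rw [IsIdempotentElem, Matrix.mul_assoc, ← Matrix.mul_assoc Aᵀ, hA, Matrix.one_mul]
  · simp [IsSelfAdjoint, star_eq_conjTranspose, conjTranspose_eq_transpose_of_trivial]

end Matrix

section

variable {m n : Type*} [Fintype m] [Fintype n] [DecidableEq n]

theorem sMin_sq (G : Matrix m n ℝ) :
    sMin G ^ 2 = ⨅ i, (posSemidef_transpose_mul_self G).isHermitian.eigenvalues i :=
  Real.sq_sqrt (Real.iInf_nonneg (posSemidef_transpose_mul_self G).eigenvalues_nonneg)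

theorem sMin_eq_zero_of_isEmpty [IsEmpty n] (G : Matrix m n ℝ) : sMin G = 0 := by
  rw [sMin, Real.iInf_of_isEmpty, Real.sqrt_zero]

theorem sMin_sq_smul_one_le (G : Matrix m n ℝ) : sMin G ^ 2 • 1 ≤ Gᵀ * G := by
  rw [(posSemidef_transpose_mul_self G).isHermitian.smul_one_le_iff_le_eigenvalues, sMin_sq]
  exact fun i => ciInf_le (Finite.bddBelow_range _) i

theorem le_sMin_sq [Nonempty n] {G : Matrix m n ℝ} {c : ℝ} (h : c • 1 ≤ Gᵀ * G) :
    c ≤ sMin G ^ 2 := by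
  rw [sMin_sq]
  exact le_ciInf
    ((posSemidef_transpose_mul_self G).isHermitian.smul_one_le_iff_le_eigenvalues.mp h)

theorem sMin_sq_le {G : Matrix m n ℝ} {c : ℝ} (hc : 0 ≤ c) (h : Gᵀ * G ≤ c • 1) :
    sMin G ^ 2 ≤ c := by
  rcases isEmpty_or_nonempty n with hn | ⟨⟨i⟩⟩
  · simpa [sMin_eq_zero_of_isEmpty] using hc
  · rw [sMin_sq]
    exact ciInf_le_of_le (Finite.bddBelow_range _) i
      ((posSemidef_transpose_mul_self G).isHermitian.le_smul_one_iff_eigenvalues_le.mp h i)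

theorem sMin_transpose_mul_sq_le_one [DecidableEq m] {A B : Matrix m n ℝ} (hA : Aᵀ * A = 1)
    (hB : Bᵀ * B = 1) :
    sMin (Aᵀ * B) ^ 2 ≤ 1 := by
  refine sMin_sq_le zero_le_one ?_
  rw [one_smul, le_iff]
  have key : 1 - (Aᵀ * B)ᵀ * (Aᵀ * B) = Bᴴ * (1 - A * Aᵀ) * B := by
    simp [conjTranspose_eq_transpose_of_trivial, Matrix.mul_sub, Matrix.sub_mul, hB,
      Matrix.mul_assoc, transpose_mul]
  exact key ▸ (le_iff.mp (mul_transpose_le_one hA)).conjTranspose_mul_mul_same B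

end

theorem Finset.one_sub_prod_le_sum_one_sub {ι : Type*} (s : Finset ι) {c : ι → ℝ}
    (h0 : ∀ i ∈ s, 0 ≤ c i) (h1 : ∀ i ∈ s, c i ≤ 1) :
    1 - ∏ i ∈ s, c i ≤ ∑ i ∈ s, (1 - c i) := by
  induction s using Finset.cons_induction with
  | empty => simp
  | cons a s ha ih =>
    simp only [Finset.mem_cons, forall_eq_or_imp] at h0 h1
    rw [Finset.prod_cons, Finset.sum_cons]
    have hP : ∏ i ∈ s, c i ≤ 1 := Finset.prod_le_one h0.2 h1.2
    nlinarith [ih h0.2 h1.2, mul_nonneg (sub_nonneg.mpr h1.1) (sub_nonneg.mpr hP)]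

theorem Real.sqrt_natCast_le_two_rpow {N : ℕ} (hN : 0 < N) :
    √(N : ℝ) ≤ 2 ^ (((N : ℝ) - 1) / 2) := by
  rw [Real.sqrt_le_iff, ← Real.rpow_natCast, ← Real.rpow_mul zero_le_two]
  refine ⟨by positivity, ?_⟩
  have h : N ≤ 2 ^ (N - 1) := by
    have := Nat.lt_two_pow_self (n := N - 1)
    omega
  have he : ((N : ℝ) - 1) / 2 * (2 : ℕ) = (N - 1 : ℕ) := by
    rw [Nat.cast_sub hN]
    push_cast
    ring
  rw [he, Real.rpow_natCast]
  exact_mod_cast h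

section

variable {ι : Type*} [Fintype ι] [DecidableEq ι] {m n : ι → Type*} [∀ k, Fintype (m k)]
  [∀ k, Fintype (n k)] [∀ k, DecidableEq (n k)]

theorem prod_sMin_sq_le_sMin_piKronecker_sq (G : ∀ k, Matrix (m k) (n k) ℝ) :
    ∏ k, sMin (G k) ^ 2 ≤ sMin (piKronecker G) ^ 2 := by
  rcases isEmpty_or_nonempty (∀ k, n k) with h | h
  · obtain ⟨k, hk⟩ := isEmpty_pi.mp h
    rw [Finset.prod_eq_zero (Finset.mem_univ k) (by simp [sMin_eq_zero_of_isEmpty])]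
    positivity
  · refine le_sMin_sq ?_
    rw [piKronecker_transpose, piKronecker_mul, ← piKronecker_one, ← piKronecker_smul]
    exact piKronecker_mono (fun k => (PosSemidef.one.smul (sq_nonneg _)).nonneg)
      fun k => sMin_sq_smul_one_le (G k)

theorem sinTheta_piKronecker_le [∀ k, DecidableEq (m k)] {A B : ∀ k, Matrix (m k) (n k) ℝ}
    (hA : ∀ k, (A k)ᵀ * A k = 1) (hB : ∀ k, (B k)ᵀ * B k = 1) :
    sinTheta (piKronecker A) (piKronecker B) ≤ √(∑ k, sinTheta (A k) (B k) ^ 2) := by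
  set c := fun k => sMin ((A k)ᵀ * B k) ^ 2
  have hc1 : ∀ k, c k ≤ 1 := fun k => sMin_transpose_mul_sq_le_one (hA k) (hB k)
  have hsin : ∀ k, sinTheta (A k) (B k) ^ 2 = 1 - c k :=
    fun k => Real.sq_sqrt (sub_nonneg.mpr (hc1 k))
  refine Real.sqrt_le_sqrt ?_
  calc 1 - sMin ((piKronecker A)ᵀ * piKronecker B) ^ 2 ≤ 1 - ∏ k, c k := by
        rw [piKronecker_transpose, piKronecker_mul]
        linarith [prod_sMin_sq_le_sMin_piKronecker_sq fun k => (A k)ᵀ * B k]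
    _ ≤ ∑ k, (1 - c k) :=
        Finset.one_sub_prod_le_sum_one_sub _ (fun k _ => sq_nonneg _) fun k _ => hc1 k
    _ = ∑ k, sinTheta (A k) (B k) ^ 2 := by simp only [hsin]

end

/-- Let `A_k, Â_k ∈ ℝ^{I_k×r_k}` have orthonormal columns for `k = 1, …, N`, and let
`M`, `M̂` be the Kronecker products of the `A_k` resp. `Â_k` (realized entrywise on
product index types: `M i j = ∏ k, A k (i k) (j k)`).  Then
`‖sin Θ(M, M̂)‖ ≤ 2^{(N−1)/2} · max_k ‖sin Θ(A_k, Â_k)‖`. -/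
theorem sinTheta_kronecker_N {N : ℕ} (hN : 0 < N) (I r : Fin N → ℕ)
    (A Ah : ∀ k, Matrix (Fin (I k)) (Fin (r k)) ℝ)
    (hA : ∀ k, (A k)ᵀ * A k = 1) (hAh : ∀ k, (Ah k)ᵀ * Ah k = 1)
    (M Mh : Matrix (∀ k, Fin (I k)) (∀ k, Fin (r k)) ℝ)
    (hM : ∀ i j, M i j = ∏ k, A k (i k) (j k))
    (hMh : ∀ i j, Mh i j = ∏ k, Ah k (i k) (j k)) :
    haveI : Nonempty (Fin N) := Fin.pos_iff_nonempty.mp hN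
    sinTheta M Mh ≤ (2 : ℝ) ^ (((N : ℝ) - 1) / 2) * ⨆ k, sinTheta (A k) (Ah k) := by
  obtain rfl : M = piKronecker A := ext hM
  obtain rfl : Mh = piKronecker Ah := ext hMh
  set S := ⨆ k, sinTheta (A k) (Ah k)
  have hS : ∀ k, sinTheta (A k) (Ah k) ≤ S := le_ciSup (Finite.bddAbove_range _)
  have hS0 : 0 ≤ S := (Real.sqrt_nonneg _).trans (hS ⟨0, hN⟩)
  calc sinTheta (piKronecker A) (piKronecker Ah)
      ≤ √(∑ k, sinTheta (A k) (Ah k) ^ 2) := sinTheta_piKronecker_le hA hAh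
    _ ≤ √(N * S ^ 2) := by
        gcongr
        have := Finset.sum_le_card_nsmul Finset.univ (fun k => sinTheta (A k) (Ah k) ^ 2) (S ^ 2)
          fun k _ => pow_le_pow_left₀ (Real.sqrt_nonneg _) (hS k) 2
        simpa using this
    _ = √N * S := by rw [Real.sqrt_mul (Nat.cast_nonneg N), Real.sqrt_sq hS0]
    _ ≤ 2 ^ (((N : ℝ) - 1) / 2) * S := by
        gcongr
        exact Real.sqrt_natCast_le_two_rpow hN
end

section
/- Let A, Ã ∈ ℝ^{m×n} be full column rank matrices. Then their Moore–Penrose pseudoinverses satisfy ‖A† − Ã†‖₂ ≤ √2 · ‖A†‖₂ · ‖Ã†‖₂ · ‖A − Ã‖₂. -/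
/-!
Let `P = A A†`, the orthogonal projection onto the range of `A`, and `E = Ã - A`. Then
`Ã† - A† = -Ã† E A† + Ã† (1 - P)`, and the rows of the two terms are orthogonal, so the squared
norm of the sum is at most the sum of the squared norms. The first term has norm at most
`‖A†‖ ‖Ã†‖ ‖E‖`. For the second, `Ã† = Ã† Ã†ᴴ Ãᴴ` and `Aᴴ (1 - P) = 0` give
`Ã† (1 - P) = Ã† Ã†ᴴ Eᴴ (1 - P)`, of norm at most `‖Ã†‖² ‖E‖`. Hence
`‖A† - Ã†‖ ≤ ‖Ã†‖ √(‖A†‖² + ‖Ã†‖²) ‖E‖`, and also the same with `‖A†‖` in front; the smaller of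
the two bounds is at most `√2 ‖A†‖ ‖Ã†‖ ‖E‖`.
-/

open Matrix

/-- Spectral norm (operator 2-norm) of a real matrix. -/
noncomputable def specNorm {m n : Type*} [Fintype m] [Fintype n] [DecidableEq n]
    (A : Matrix m n ℝ) : ℝ :=
  ‖LinearMap.toContinuousLinearMap (Matrix.toEuclideanLin A)‖

/-- Moore–Penrose pseudoinverse of a full-column-rank matrix. -/
noncomputable def pinv {m n : ℕ} (B : Matrix (Fin m) (Fin n) ℝ) : Matrix (Fin n) (Fin m) ℝ :=
  (Bᵀ * B)⁻¹ * Bᵀ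

open scoped Matrix.Norms.L2Operator

theorem min_mul_sqrt_sq_add_sq_le {a b : ℝ} (ha : 0 ≤ a) (hb : 0 ≤ b) :
    min a b * √(a ^ 2 + b ^ 2) ≤ √2 * a * b := by
  wlog hab : a ≤ b generalizing a b
  · rw [min_comm, add_comm, mul_right_comm]
    exact this hb ha (le_of_not_ge hab)
  calc min a b * √(a ^ 2 + b ^ 2) ≤ a * √(2 * b ^ 2) := by
        rw [min_eq_left hab]
        gcongr
        linarith [pow_le_pow_left₀ ha hab 2]
    _ = √2 * a * b := by rw [Real.sqrt_mul zero_le_two, Real.sqrt_sq hb]; ring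

namespace Matrix

theorem isUnit_of_rank_eq_card {K n : Type*} [Field K] [Fintype n] [DecidableEq n]
    {A : Matrix n n K} (h : A.rank = Fintype.card n) : IsUnit A := by
  rw [← mulVec_surjective_iff_isUnit, ← Matrix.coe_mulVecLin, ← LinearMap.range_eq_top]
  exact Submodule.eq_top_of_finrank_eq (by simpa [rank] using h)

section L2OpNorm

variable {𝕜 : Type*} [RCLike 𝕜] {m n : Type*} [Fintype m] [Fintype n] [DecidableEq n]
  {A B : Matrix m n 𝕜} {X Y : Matrix n m 𝕜}

theorem isStarProjection_mul_of_mul_eq_one (hX : X * A = 1) (hAX : (A * X).IsHermitian) :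
    IsStarProjection (A * X) where
  isIdempotentElem := by
    rw [IsIdempotentElem, Matrix.mul_assoc, ← Matrix.mul_assoc X, hX, Matrix.one_mul]
  isSelfAdjoint := hAX.isSelfAdjoint

variable [DecidableEq m]

theorem l2_opNorm_mul_conjTranspose_self (A : Matrix m n 𝕜) : ‖A * Aᴴ‖ = ‖A‖ * ‖A‖ := by
  simpa [l2_opNorm_conjTranspose] using l2_opNorm_conjTranspose_mul_self Aᴴ

theorem l2_opNorm_add_sq_le_of_mul_conjTranspose_eq_zero {S T : Matrix m n 𝕜}
    (h : S * Tᴴ = 0) : ‖S + T‖ ^ 2 ≤ ‖S‖ ^ 2 + ‖T‖ ^ 2 := by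
  have hTS : T * Sᴴ = 0 := by rw [← conjTranspose_conjTranspose T, ← conjTranspose_mul, h,
    conjTranspose_zero]
  have hsum : (S + T) * (S + T)ᴴ = S * Sᴴ + T * Tᴴ := by
    simp only [conjTranspose_add, Matrix.mul_add, Matrix.add_mul, h, hTS]
    abel
  calc ‖S + T‖ ^ 2 = ‖S * Sᴴ + T * Tᴴ‖ := by rw [← hsum, l2_opNorm_mul_conjTranspose_self, sq]
    _ ≤ ‖S * Sᴴ‖ + ‖T * Tᴴ‖ := norm_add_le _ _
    _ = ‖S‖ ^ 2 + ‖T‖ ^ 2 := by simp only [l2_opNorm_mul_conjTranspose_self, sq]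

theorem sub_eq_neg_add_of_mul_eq_one (hY : Y * B = 1) :
    Y - X = -(Y * (B - A) * X) + Y * (1 - A * X) := by
  rw [Matrix.mul_sub, hY, Matrix.sub_mul, Matrix.one_mul, Matrix.mul_sub, Matrix.mul_one,
    Matrix.mul_assoc]
  abel

theorem mul_mul_conjTranspose_one_sub_eq_zero (hX : X * A = 1) (hAX : (A * X).IsHermitian)
    (Z : Matrix n n 𝕜) : Z * X * (Y * (1 - A * X))ᴴ = 0 := by
  have hP := (isStarProjection_mul_of_mul_eq_one hX hAX).one_sub
  rw [conjTranspose_mul, hP.isSelfAdjoint.isHermitian.eq, ← Matrix.mul_assoc, Matrix.mul_assoc Z,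
    Matrix.mul_sub, Matrix.mul_one, ← Matrix.mul_assoc, hX, Matrix.one_mul, sub_self,
    Matrix.mul_zero, Matrix.zero_mul]

theorem l2_opNorm_mul_one_sub_le (hX : X * A = 1) (hAX : (A * X).IsHermitian) (hY : Y * B = 1)
    (hBY : (B * Y).IsHermitian) : ‖Y * (1 - A * X)‖ ≤ ‖Y‖ ^ 2 * ‖B - A‖ := by
  have hP := (isStarProjection_mul_of_mul_eq_one hX hAX).one_sub
  -- `Y = Y Yᴴ Bᴴ`, and `Bᴴ` may be replaced by `(B - A)ᴴ` since `Aᴴ (1 - A X) = 0`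
  have hY' : Y * Yᴴ * Bᴴ = Y := by
    rw [Matrix.mul_assoc, ← conjTranspose_mul, hBY.eq, ← Matrix.mul_assoc, hY,
      Matrix.one_mul]
  have hA : Aᴴ * (1 - A * X) = 0 := by
    rw [← conjTranspose_conjTranspose (1 - A * X), ← conjTranspose_mul,
      hP.isSelfAdjoint.isHermitian.eq, Matrix.sub_mul, Matrix.mul_assoc, hX, Matrix.mul_one,
      Matrix.one_mul, sub_self,
      conjTranspose_zero]
  have hrepr : Y * (1 - A * X) = Y * Yᴴ * ((B - A)ᴴ * (1 - A * X)) := by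
    rw [conjTranspose_sub, Matrix.sub_mul, hA, sub_zero, ← Matrix.mul_assoc, hY']
  calc ‖Y * (1 - A * X)‖ ≤ ‖Y‖ * ‖Yᴴ‖ * (‖(B - A)ᴴ‖ * ‖1 - A * X‖) := by
        rw [hrepr]
        refine (l2_opNorm_mul _ _).trans (mul_le_mul (l2_opNorm_mul _ _) (l2_opNorm_mul _ _)
          (norm_nonneg _) (by positivity))
    _ ≤ ‖Y‖ * ‖Y‖ * (‖B - A‖ * 1) := by
        rw [l2_opNorm_conjTranspose, l2_opNorm_conjTranspose]
        gcongr
        exact hP.norm_le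
    _ = ‖Y‖ ^ 2 * ‖B - A‖ := by ring

theorem l2_opNorm_sub_le_mul_sqrt (hX : X * A = 1) (hAX : (A * X).IsHermitian)
    (hY : Y * B = 1) (hBY : (B * Y).IsHermitian) :
    ‖Y - X‖ ≤ ‖Y‖ * √(‖X‖ ^ 2 + ‖Y‖ ^ 2) * ‖B - A‖ := by
  have hT₁ : ‖-(Y * (B - A) * X)‖ ≤ ‖Y‖ * ‖B - A‖ * ‖X‖ := by
    rw [norm_neg]
    exact (l2_opNorm_mul _ _).trans (by gcongr; exact l2_opNorm_mul _ _)
  have hT₂ := l2_opNorm_mul_one_sub_le hX hAX hY hBY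
  refine le_of_pow_le_pow_left₀ two_ne_zero (by positivity) ?_
  calc ‖Y - X‖ ^ 2 ≤ ‖-(Y * (B - A) * X)‖ ^ 2 + ‖Y * (1 - A * X)‖ ^ 2 := by
        rw [sub_eq_neg_add_of_mul_eq_one hY]
        refine l2_opNorm_add_sq_le_of_mul_conjTranspose_eq_zero ?_
        rw [Matrix.neg_mul, mul_mul_conjTranspose_one_sub_eq_zero hX hAX, neg_zero]
    _ ≤ (‖Y‖ * ‖B - A‖ * ‖X‖) ^ 2 + (‖Y‖ ^ 2 * ‖B - A‖) ^ 2 := by gcongr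
    _ = (‖Y‖ * √(‖X‖ ^ 2 + ‖Y‖ ^ 2) * ‖B - A‖) ^ 2 := by
        conv_rhs => rw [mul_pow, mul_pow, Real.sq_sqrt (by positivity)]
        ring

theorem l2_opNorm_sub_le_sqrt_two_mul (hX : X * A = 1) (hAX : (A * X).IsHermitian)
    (hY : Y * B = 1) (hBY : (B * Y).IsHermitian) :
    ‖X - Y‖ ≤ √2 * ‖X‖ * ‖Y‖ * ‖A - B‖ := by
  have hXY := l2_opNorm_sub_le_mul_sqrt hY hBY hX hAX
  have hYX := l2_opNorm_sub_le_mul_sqrt hX hAX hY hBY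
  rw [add_comm] at hXY
  rw [norm_sub_rev Y, norm_sub_rev B] at hYX
  calc ‖X - Y‖ ≤ min ‖X‖ ‖Y‖ * √(‖X‖ ^ 2 + ‖Y‖ ^ 2) * ‖A - B‖ := by
        rw [min_mul_of_nonneg _ _ (Real.sqrt_nonneg _), min_mul_of_nonneg _ _ (norm_nonneg _)]
        exact le_min hXY hYX
    _ ≤ √2 * ‖X‖ * ‖Y‖ * ‖A - B‖ :=
        mul_le_mul_of_nonneg_right (min_mul_sqrt_sq_add_sq_le (norm_nonneg _) (norm_nonneg _))
          (norm_nonneg _)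

end L2OpNorm

end Matrix

theorem pinv_mul_self {m n : ℕ} {B : Matrix (Fin m) (Fin n) ℝ} (hB : B.rank = n) :
    pinv B * B = 1 := by
  have h : IsUnit (Bᵀ * B) := isUnit_of_rank_eq_card (by rw [rank_transpose_mul_self, hB,
    Fintype.card_fin])
  rw [pinv, Matrix.mul_assoc, nonsing_inv_mul _ ((isUnit_iff_isUnit_det _).mp h)]

theorem isHermitian_mul_pinv {m n : ℕ} (B : Matrix (Fin m) (Fin n) ℝ) :
    (B * pinv B).IsHermitian := by
  rw [pinv, ← Matrix.mul_assoc, ← conjTranspose_eq_transpose_of_trivial]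
  exact isHermitian_mul_mul_conjTranspose B (isHermitian_conjTranspose_mul_self B).inv

/-- Wedin's perturbation bound for pseudoinverses of full-column-rank matrices:
`‖A† − Ã†‖₂ ≤ √2 · ‖A†‖₂ · ‖Ã†‖₂ · ‖A − Ã‖₂`. -/
theorem wedin_pinv_perturbation {m n : ℕ}
    (A Atil : Matrix (Fin m) (Fin n) ℝ)
    (hA : A.rank = n) (hAtil : Atil.rank = n) :
    specNorm (pinv A - pinv Atil) ≤
      Real.sqrt 2 * specNorm (pinv A) * specNorm (pinv Atil) * specNorm (A - Atil) :=
  -- `specNorm` is definitionally the norm of `Matrix.Norms.L2Operator`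
  l2_opNorm_sub_le_sqrt_two_mul (pinv_mul_self hA) (isHermitian_mul_pinv A)
    (pinv_mul_self hAtil) (isHermitian_mul_pinv Atil)
end
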